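/- Let m ≥ 1, γ a primitive m-th root of unity in k, φ_i(x) = 1 - γ^{-i-1} x^d, and let 1 ≤ i ≤ m-1. Then ∑_{j=0}^{m-1} γ^{-j} · φ_j φ_{j+1} ⋯ φ_{j+m-2-i} = 0, where the product runs over m-1-i consecutive factors with indices mod m (i.e. omitting the i+1 consecutive factors φ_{j-1-i}, …, φ_{j-1} from φ_0 ⋯ φ_{m-1}). -/

import Mathlib

/-!
Writing `ζ = γ⁻¹` and `p = ∏_{r < n} (1 - ζ^{r+1} X)` with `n = m - 1 - i`, the `j`-th summand is
`ζ^j p(ζ^j x^d)`. The coefficient of `y^s` in `∑_j ζ^j p(ζ^j y)` is `p_s ∑_j (ζ^{s+1})^j`, which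
vanishes because `deg p = n < m - 1` keeps `1 ≤ s + 1 < m`, so `ζ^{s+1}` is an `m`-th root of
unity different from `1`.
-/

open Polynomial Finset

theorem geom_sum_eq_zero_of_pow_eq_one {R : Type*} [CommRing R] [IsDomain R] {x : R} {m : ℕ}
    (hx : x ^ m = 1) (hx1 : x ≠ 1) : ∑ i ∈ range m, x ^ i = 0 :=
  eq_zero_of_ne_zero_of_mul_left_eq_zero (sub_ne_zero_of_ne hx1.symm)
    (by rw [mul_neg_geom_sum, hx, sub_self])

namespace Polynomial

variable {R : Type*}

theorem coeff_comp_C_mul_X [CommSemiring R] (p : R[X]) (a : R) (n : ℕ) :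
    (p.comp (C a * X)).coeff n = a ^ n * p.coeff n := by
  induction p using Polynomial.induction_on' with
  | add p q hp hq => simp only [add_comp, coeff_add, hp, hq, mul_add]
  | monomial k b =>
    rw [monomial_comp, mul_pow, ← C_pow, ← mul_assoc, ← C_mul, coeff_C_mul_X_pow, coeff_monomial]
    split_ifs <;> simp_all [mul_comm]

theorem natDegree_prod_one_sub_C_mul_X_le [CommRing R] {ι : Type*} (s : Finset ι) (c : ι → R) :
    (∏ i ∈ s, (1 - C (c i) * X)).natDegree ≤ #s := by
  refine (natDegree_prod_le _ _).trans ?_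
  simpa using sum_le_card_nsmul s _ 1 fun i _ =>
    (natDegree_sub_le _ _).trans (max_le (by simp) (natDegree_C_mul_le _ _ |>.trans natDegree_X_le))

end Polynomial

theorem IsPrimitiveRoot.sum_C_pow_mul_comp_C_pow_mul_X_eq_zero {R : Type*} [CommRing R]
    [IsDomain R] {ζ : R} {m : ℕ} (hζ : IsPrimitiveRoot ζ m) {p : R[X]}
    (hp : p.natDegree + 1 < m) :
    ∑ j ∈ range m, C (ζ ^ j) * p.comp (C (ζ ^ j) * X) = 0 := by
  ext n
  have hcoeff : ∀ j, ζ ^ j * ((ζ ^ j) ^ n * p.coeff n) = p.coeff n * (ζ ^ (n + 1)) ^ j :=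
    fun j => by ring
  simp only [finsetSum_coeff, coeff_C_mul, coeff_comp_C_mul_X, hcoeff, ← mul_sum, coeff_zero]
  rcases le_or_gt n p.natDegree with hn | hn
  · have hpow : (ζ ^ (n + 1)) ^ m = 1 := by
      rw [← pow_mul, mul_comm, pow_mul, hζ.pow_eq_one, one_pow]
    rw [geom_sum_eq_zero_of_pow_eq_one hpow
      (hζ.pow_ne_one_of_pos_of_lt n.succ_ne_zero (by omega)), mul_zero]
  · rw [coeff_eq_zero_of_natDegree_lt hn, zero_mul]

theorem stmt_5_general {k : Type*} [Field k]
    (m d : ℕ) (γ : k) (hγ : IsPrimitiveRoot γ m)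
    (i : ℕ) (hi1 : 1 ≤ i) (hi2 : i ≤ m - 1) :
    ∑ j ∈ Finset.range m, Polynomial.C (γ ^ (-(j : ℤ))) *
      ∏ r ∈ Finset.range (m - 1 - i),
        ((1 : Polynomial k) - Polynomial.C (γ ^ (-((j : ℤ) + (r : ℤ)) - 1)) * Polynomial.X ^ d)
      = 0 := by
  set p : k[X] := ∏ r ∈ range (m - 1 - i), (1 - C (γ⁻¹ ^ (r + 1)) * X)
  have hzpow : ∀ n : ℕ, γ ^ (-(n : ℤ)) = γ⁻¹ ^ n := fun n => by
    rw [zpow_neg, zpow_natCast, inv_pow]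
  have hterm : ∀ j : ℕ, C (γ ^ (-(j : ℤ))) * ∏ r ∈ range (m - 1 - i),
      ((1 : k[X]) - C (γ ^ (-((j : ℤ) + (r : ℤ)) - 1)) * X ^ d) =
      (C (γ⁻¹ ^ j) * p.comp (C (γ⁻¹ ^ j) * X)).comp (X ^ d) := by
    intro j
    have hexp : ∀ r : ℕ, γ ^ (-((j : ℤ) + r) - 1) = γ⁻¹ ^ (r + 1) * γ⁻¹ ^ j := fun r => by
      rw [← pow_add, ← hzpow]; congr 1; push_cast; ring
    simp only [p, hexp, hzpow, mul_comp, C_comp, Polynomial.prod_comp, sub_comp, one_comp, X_comp,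
      C_mul, mul_assoc]
  have hdeg : p.natDegree ≤ m - 1 - i :=
    (natDegree_prod_one_sub_C_mul_X_le _ _).trans_eq (card_range _)
  rw [sum_congr rfl fun j _ => hterm j, ← Polynomial.sum_comp,
    hγ.inv.sum_C_pow_mul_comp_C_pow_mul_X_eq_zero (by omega), zero_comp]

/-- for 1 ≤ i ≤ m-1, ∑_{j=0}^{m-1} γ^{-j} φ_j φ_{j+1} ⋯ φ_{j+m-2-i} = 0,
the product having m-1-i factors (indices mod m). -/
theorem stmt_5 {k : Type*} [Field k] [IsAlgClosed k] [CharZero k]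
    (m d : ℕ) (hm : 1 ≤ m) (hd : 1 ≤ d) (γ : k) (hγ : IsPrimitiveRoot γ m)
    (i : ℕ) (hi1 : 1 ≤ i) (hi2 : i ≤ m - 1) :
    ∑ j ∈ Finset.range m, Polynomial.C (γ ^ (-(j : ℤ))) *
      ∏ r ∈ Finset.range (m - 1 - i),
        ((1 : Polynomial k) - Polynomial.C (γ ^ (-((j : ℤ) + (r : ℤ)) - 1)) * Polynomial.X ^ d)
      = 0 :=
  stmt_5_general m d γ hγ i hi1 hi2
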